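/- arXiv:math/0209174 — 2 statements merged into one kernel-verified Lean document; each statement's English description precedes it below -/
import Mathlib

section
/- Let R be a Noetherian integral domain of prime characteristic p that has a module-finite extension domain S (R ⊆ S, S a domain, finitely generated as an R-module) in which tight closure commutes with localization. Then tight closure commutes with localization in R. -/
/-- The `q`-th Frobenius power `I^{[q]}` of an ideal `I`: the ideal generated by
`q`-th powers of elements of `I`. -/
def Ideal.frobeniusPower {R : Type*} [CommRing R] (I : Ideal R) (q : ℕ) : Ideal R :=
  Ideal.span ((fun x => x ^ q) '' (I : Set R))

/-- `R°`: the set of elements of `R` not contained in any minimal prime of `R`. -/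
def primeComplement (R : Type*) [CommRing R] : Set R :=
  { c | ∀ P ∈ minimalPrimes R, c ∉ P }

/-- The tight closure `I*` of an ideal `I` in a ring of characteristic `p`:
elements `z` such that `c * z ^ (p ^ e) ∈ I ^ [p ^ e]` for some `c ∈ R°`
and all sufficiently large `e`. -/
def tightClosure (p : ℕ) {R : Type*} [CommRing R] (I : Ideal R) : Set R :=
  { z | ∃ c ∈ primeComplement R, ∃ N : ℕ, ∀ e : ℕ, N ≤ e →
      c * z ^ p ^ e ∈ I.frobeniusPower (p ^ e) }

/-- Tight closure commutes with localization in `R`: for every ideal `I` and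
multiplicative set `U`, `I* · R[U⁻¹] = (I · R[U⁻¹])*`. -/
def TightClosureCommutesWithLocalization (p : ℕ) (R : Type*) [CommRing R] : Prop :=
  ∀ (I : Ideal R) (U : Submonoid R),
    (Ideal.map (algebraMap R (Localization U)) (Ideal.span (tightClosure p I)) :
        Set (Localization U))
      = tightClosure p (Ideal.map (algebraMap R (Localization U)) I)

/-- A ring is F-regular if every ideal is tightly closed, both in the ring itself
and in all of its localizations. -/
def FRegular (p : ℕ) (S : Type*) [CommRing S] : Prop :=
  (∀ I : Ideal S, tightClosure p I = (I : Set S)) ∧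
    ∀ (U : Submonoid S) (J : Ideal (Localization U)),
      tightClosure p J = (J : Set (Localization U))

/-! Persistence of tight closure along `R → R[U⁻¹]` gives `I* R[U⁻¹] ⊆ (I R[U⁻¹])*`.
Conversely, persistence along `R[U⁻¹] → S[U⁻¹]` and the hypothesis on `S` put an element
of `(I R[U⁻¹])*` into `(IS)* S[U⁻¹] ∩ R[U⁻¹] = ((IS)* ∩ R) R[U⁻¹]`, and `(IS)* ∩ R ⊆ I*`
because an `R`-linear map `S → R` not vanishing at `1` carries `I^[q] S` into `I^[q]`. -/

section PrimeComplement

variable {R : Type*} [CommRing R]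

theorem one_mem_primeComplement : (1 : R) ∈ primeComplement R :=
  fun _ hP h => hP.1.1.ne_top ((Ideal.eq_top_iff_one _).2 h)

theorem mul_mem_primeComplement {a b : R} (ha : a ∈ primeComplement R)
    (hb : b ∈ primeComplement R) : a * b ∈ primeComplement R :=
  fun P hP hab => (hP.1.1.mem_or_mem hab).elim (ha P hP) (hb P hP)

theorem primeComplement_eq_setOf_ne_zero [IsDomain R] : primeComplement R = {x | x ≠ 0} := by
  have : minimalPrimes R = {⊥} := Ideal.minimalPrimes_eq_subsingleton_self
  ext x
  simp [primeComplement, this]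

theorem map_mem_primeComplement_of_injective {S : Type*} [CommRing S] [IsDomain R] [IsDomain S]
    {f : R →+* S} (hf : Function.Injective f) {c : R} (hc : c ∈ primeComplement R) :
    f c ∈ primeComplement S := by
  rw [primeComplement_eq_setOf_ne_zero] at hc ⊢
  exact (map_ne_zero_iff f hf).2 hc

end PrimeComplement

namespace Ideal

variable {R S : Type*} [CommRing R] [CommRing S]

theorem map_frobeniusPower_le (f : R →+* S) (I : Ideal R) (q : ℕ) :
    (I.frobeniusPower q).map f ≤ (I.map f).frobeniusPower q := by
  rw [frobeniusPower, map_span]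
  refine span_le.2 ?_
  rintro _ ⟨_, ⟨x, hx, rfl⟩, rfl⟩
  exact subset_span ⟨f x, mem_map_of_mem f hx, (map_pow f x q).symm⟩

theorem frobeniusPower_eq_map (p : ℕ) [ExpChar R p] (I : Ideal R) (e : ℕ) :
    I.frobeniusPower (p ^ e) = I.map (iterateFrobenius R p e) := rfl

theorem map_frobeniusPower (p : ℕ) [ExpChar R p] [ExpChar S p] (f : R →+* S) (I : Ideal R)
    (e : ℕ) : (I.frobeniusPower (p ^ e)).map f = (I.map f).frobeniusPower (p ^ e) := by
  simp only [frobeniusPower_eq_map, map_map]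
  congr 1
  ext x
  simp [iterateFrobenius_def]

end Ideal

section TightClosure

variable (p : ℕ) {R : Type*} [CommRing R]

theorem tightClosure_eq_univ_of_subsingleton [Subsingleton R] (I : Ideal R) :
    tightClosure p I = Set.univ :=
  Set.eq_univ_of_forall fun _ => ⟨1, one_mem_primeComplement, 0, fun _ _ => by
    simp [Subsingleton.elim _ (0 : R)]⟩

theorem map_mem_tightClosure {A : Type*} [CommRing A] {f : R →+* A}
    (hf : ∀ c ∈ primeComplement R, f c ∈ primeComplement A) {I : Ideal R} {z : R}
    (hz : z ∈ tightClosure p I) : f z ∈ tightClosure p (I.map f) := by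
  obtain ⟨c, hc, N, h⟩ := hz
  refine ⟨f c, hf c hc, N, fun e he => ?_⟩
  rw [← map_pow, ← map_mul]
  exact Ideal.map_frobeniusPower_le f I _ (Ideal.mem_map_of_mem f (h e he))

variable [ExpChar R p]

def tightClosureIdeal (I : Ideal R) : Ideal R where
  carrier := tightClosure p I
  zero_mem' := ⟨1, one_mem_primeComplement, 0, fun e _ => by
    simp [← iterateFrobenius_def p e]⟩
  add_mem' := by
    rintro a b ⟨c, hc, M, ha⟩ ⟨d, hd, N, hb⟩
    refine ⟨c * d, mul_mem_primeComplement hc hd, max M N, fun e he => ?_⟩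
    have hsplit : c * d * (a + b) ^ p ^ e = d * (c * a ^ p ^ e) + c * (d * b ^ p ^ e) := by
      rw [add_pow_expChar_pow]; ring
    rw [hsplit]
    exact add_mem (Ideal.mul_mem_left _ _ (ha e (le_of_max_le_left he)))
      (Ideal.mul_mem_left _ _ (hb e (le_of_max_le_right he)))
  smul_mem' := by
    rintro r a ⟨c, hc, N, h⟩
    refine ⟨c, hc, N, fun e he => ?_⟩
    rw [smul_eq_mul, mul_pow, mul_left_comm]
    exact Ideal.mul_mem_left _ _ (h e he)

theorem span_tightClosure (I : Ideal R) :
    Ideal.span (tightClosure p I) = tightClosureIdeal p I :=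
  Ideal.span_eq (tightClosureIdeal p I)

end TightClosure

theorem map_span_tightClosure_subset (p : ℕ) {R A : Type*} [CommRing R] [CommRing A]
    [ExpChar A p] {f : R →+* A} (hf : ∀ c ∈ primeComplement R, f c ∈ primeComplement A)
    (I : Ideal R) :
    ((Ideal.span (tightClosure p I)).map f : Set A) ⊆ tightClosure p (I.map f) := by
  rw [Ideal.map_span]
  refine Ideal.span_le (I := tightClosureIdeal p (I.map f)).2 ?_
  rintro _ ⟨z, hz, rfl⟩
  exact map_mem_tightClosure p hf hz

section ModuleFinite

variable (R M : Type*) [CommRing R] [IsDomain R] [AddCommGroup M] [Module R M]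
  [Module.Finite R M]

theorem Module.Finite.exists_free_submodule_smul_mem :
    ∃ (F : Submodule R M) (d : R), Module.Free R F ∧ d ≠ 0 ∧ ∀ x : M, d • x ∈ F := by
  obtain ⟨T, hT, hmax⟩ := exists_maximal_linearIndepOn R (id : M → M)
  set F := Submodule.span R (Set.range ((↑) : T → M))
  have hTF : ∀ x ∈ T, x ∈ F := fun x hx => Submodule.subset_span ⟨⟨x, hx⟩, rfl⟩
  have htorsion : Module.IsTorsion R (M ⧸ F) := by
    rintro ⟨x⟩
    by_cases hx : x ∈ T
    · exact ⟨1, (Submodule.Quotient.mk_eq_zero F).2 (by simpa using hTF x hx)⟩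
    · obtain ⟨a, ha, haF⟩ := hmax x hx
      refine ⟨⟨a, mem_nonZeroDivisors_of_ne_zero ha⟩, (Submodule.Quotient.mk_eq_zero F).2 ?_⟩
      simpa [F] using haF
  obtain ⟨d, hdann, hd⟩ := Submodule.annihilator_top_inter_nonZeroDivisors htorsion
  refine ⟨F, d, .of_basis (.span hT), nonZeroDivisors.ne_zero hd, fun x => ?_⟩
  rw [← Submodule.Quotient.mk_eq_zero, Submodule.Quotient.mk_smul]
  exact Submodule.mem_annihilator.1 hdann _ Submodule.mem_top

variable {R M} [Module.IsTorsionFree R M]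

theorem Module.exists_dual_apply_ne_zero {x : M} (hx : x ≠ 0) :
    ∃ φ : Module.Dual R M, φ x ≠ 0 := by
  obtain ⟨F, d, _, hd, hdF⟩ := Module.Finite.exists_free_submodule_smul_mem R M
  let m : M →ₗ[R] F := (d • LinearMap.id).codRestrict F hdF
  obtain ⟨ψ, hψ⟩ := Module.Projective.exists_dual_ne_zero R (x := m x)
    (by simpa [m, Subtype.ext_iff] using smul_ne_zero hd hx)
  exact ⟨ψ ∘ₗ m, hψ⟩

end ModuleFinite

theorem IsIntegral.exists_ne_zero_dvd_algebraMap {R S : Type*} [CommRing R] [Nontrivial R]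
    [CommRing S] [IsDomain S] [Algebra R S] {c : S} (hc : IsIntegral R c) (hc0 : c ≠ 0) :
    ∃ r : R, r ≠ 0 ∧ c ∣ algebraMap R S r := by
  obtain ⟨r, hr, hr0⟩ := Submodule.exists_mem_ne_zero_of_ne_bot
    (Ideal.comap_ne_bot_of_integral_mem hc0 (Ideal.mem_span_singleton_self c) hc)
  exact ⟨r, hr0, Ideal.mem_span_singleton.1 hr⟩

theorem LinearMap.apply_mem_of_mem_map_algebraMap {R S : Type*} [CommRing R] [CommRing S]
    [Algebra R S] (φ : S →ₗ[R] R) {I : Ideal R} {w : S} (hw : w ∈ I.map (algebraMap R S)) :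
    φ w ∈ I := by
  rw [← Submodule.restrictScalars_mem R, ← Ideal.smul_top_eq_map] at hw
  have := Submodule.mem_map_of_mem (f := φ) hw
  rw [Submodule.map_smul''] at this
  exact Submodule.smul_le.2 (fun r hr n _ => I.mul_mem_right n hr) this

section Contraction

variable (p : ℕ) {R S : Type*} [CommRing R] [IsDomain R] [CommRing S] [IsDomain S] [Algebra R S]
  [ExpChar R p] [Module.Finite R S]

theorem mem_tightClosure_of_algebraMap_mem (hinj : Function.Injective (algebraMap R S))
    {I : Ideal R} {x : R} (hx : algebraMap R S x ∈ tightClosure p (I.map (algebraMap R S))) :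
    x ∈ tightClosure p I := by
  have : ExpChar S p := expChar_of_injective_algebraMap hinj p
  have : Module.IsTorsionFree R S := Module.isTorsionFree_iff_algebraMap_injective (R := R).2 hinj
  obtain ⟨c, hc, N, h⟩ := hx
  obtain ⟨r, hr, b, hrb⟩ := (IsIntegral.of_finite R c).exists_ne_zero_dvd_algebraMap
    (by simpa [primeComplement_eq_setOf_ne_zero] using hc)
  obtain ⟨φ, hφ⟩ := Module.exists_dual_apply_ne_zero (R := R) (one_ne_zero : (1 : S) ≠ 0)
  refine ⟨r * φ 1, by simp [primeComplement_eq_setOf_ne_zero, hr, hφ], N, fun e he => ?_⟩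
  have hmem :
      algebraMap R S (r * x ^ p ^ e) ∈ (I.frobeniusPower (p ^ e)).map (algebraMap R S) := by
    rw [Ideal.map_frobeniusPower, map_mul, hrb, map_pow, mul_right_comm]
    exact Ideal.mul_mem_right _ _ (h e he)
  have := φ.apply_mem_of_mem_map_algebraMap hmem
  rwa [Algebra.algebraMap_eq_smul_one, map_smul, smul_eq_mul, mul_right_comm] at this

theorem comap_span_tightClosure_le (hinj : Function.Injective (algebraMap R S)) (I : Ideal R) :
    (Ideal.span (tightClosure p (I.map (algebraMap R S)))).comap (algebraMap R S) ≤
      Ideal.span (tightClosure p I) := by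
  have : ExpChar S p := expChar_of_injective_algebraMap hinj p
  intro x hx
  rw [Ideal.mem_comap, span_tightClosure] at hx
  rw [span_tightClosure]
  exact mem_tightClosure_of_algebraMap_mem p hinj hx

end Contraction

theorem Localization.mem_map_comap_of_map_mem {R S : Type*} [CommRing R] [CommRing S]
    (f : R →+* S) {U : Submonoid R} (J : Ideal S) {x : Localization U}
    (hx : IsLocalization.map (Localization (U.map f)) f U.le_comap_map x ∈
      J.map (algebraMap S (Localization (U.map f)))) :
    x ∈ (J.comap f).map (algebraMap R (Localization U)) := by
  obtain ⟨r, u, rfl⟩ := IsLocalization.mk'_surjective U x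
  rw [IsLocalization.map_mk', IsLocalization.mk'_mem_map_algebraMap_iff (U.map f)] at hx
  obtain ⟨_, ⟨w, hw, rfl⟩, hmem⟩ := hx
  rw [IsLocalization.mk'_mem_map_algebraMap_iff U]
  exact ⟨w, hw, by rwa [Ideal.mem_comap, map_mul]⟩

theorem tightClosure_commutes_localization_of_module_finite_extension_general
    (p : ℕ) [Fact p.Prime] (R : Type) [CommRing R] [IsDomain R]
    [CharP R p] (S : Type) [CommRing S] [IsDomain S] [Algebra R S]
    (hinj : Function.Injective (algebraMap R S)) [Module.Finite R S]
    (hS : TightClosureCommutesWithLocalization p S) :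
    TightClosureCommutesWithLocalization p R := by
  intro I U
  by_cases h0 : (0 : R) ∈ U
  · have := IsLocalization.subsingleton (S := Localization U) h0
    rw [tightClosure_eq_univ_of_subsingleton (R := Localization U)]
    exact Set.eq_univ_of_forall fun x => Subsingleton.elim 0 x ▸ Ideal.zero_mem _
  set f := algebraMap R S
  set ψ := IsLocalization.map (Localization (U.map f)) f U.le_comap_map (S := Localization U)
  have hU : U ≤ nonZeroDivisors R := le_nonZeroDivisors_of_noZeroDivisors h0
  have hU' : U.map f ≤ nonZeroDivisors S :=
    le_nonZeroDivisors_of_noZeroDivisors fun ⟨u, hu, hu0⟩ =>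
      h0 (hinj (hu0.trans (map_zero f).symm) ▸ hu)
  have := IsLocalization.isDomain_localization hU
  have := IsLocalization.isDomain_localization hU'
  have : CharP (Localization U) p := charP_of_injective_algebraMap (IsLocalization.injective _ hU) p
  have hψinj : Function.Injective ψ := IsLocalization.map_injective_of_injective U _ _ hinj
  refine Set.Subset.antisymm (map_span_tightClosure_subset p
    (fun _ => map_mem_primeComplement_of_injective (IsLocalization.injective _ hU)) I)
    fun x hx => ?_
  have hψx : ψ x ∈ (Ideal.span (tightClosure p (I.map f))).map (algebraMap S _) := by
    rw [SetLike.mem_coe.symm, hS, Ideal.map_map,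
      ← IsLocalization.map_comp (S := Localization U) U.le_comap_map, ← Ideal.map_map]
    exact map_mem_tightClosure p (fun _ => map_mem_primeComplement_of_injective hψinj) hx
  exact Ideal.map_mono (comap_span_tightClosure_le p hinj I)
    (Localization.mem_map_comap_of_map_mem f _ hψx)

/-- **Lemma 2.** A Noetherian domain that has a module-finite extension domain in
which tight closure commutes with localization itself has tight closure commuting
with localization. -/
theorem tightClosure_commutes_localization_of_module_finite_extension
    (p : ℕ) [Fact p.Prime] (R : Type) [CommRing R] [IsDomain R] [IsNoetherianRing R]
    [CharP R p] (S : Type) [CommRing S] [IsDomain S] [Algebra R S]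
    (hinj : Function.Injective (algebraMap R S)) [Module.Finite R S]
    (hS : TightClosureCommutesWithLocalization p S) :
    TightClosureCommutesWithLocalization p R :=
  tightClosure_commutes_localization_of_module_finite_extension_general p R S hinj hS
end

section
/- Let R ⊆ S be an extension of integral domains with S module-finite over R, and let c be a nonzero element of S. Then there exists an R-linear map φ : S → R such that φ(c) is a nonzero element of R. -/
/-!
Localizing at the nonzero elements of `R` turns `S` into a finite-dimensional vector space over
the fraction field `K`, in which `c` stays nonzero because `S` is torsion-free; so some
`K`-linear functional is nonzero at `c`. Restricted to `S` it takes values in `K`, and since `S`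
is finitely generated, multiplying it by a common denominator of its values on the generators
gives an `R`-valued functional that is still nonzero at `c`.
-/

open nonZeroDivisors

namespace IsLocalization

variable {R A M : Type*} [CommRing R] [CommRing A] [Algebra R A] (S : Submonoid R)
  [IsLocalization S A] [AddCommGroup M] [Module R M] [Module.Finite R M]

theorem exists_smul_mem_range_linearMap (ψ : M →ₗ[R] A) :
    ∃ b : S, ∀ x, (b : R) • ψ x ∈ LinearMap.range (Algebra.linearMap R A) := by
  obtain ⟨T, hT⟩ := Module.Finite.fg_top (R := R) (M := M)
  obtain ⟨b, hb⟩ := exist_integer_multiples S T ψ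
  have hspan : Submodule.span R T ≤
      (LinearMap.range (Algebra.linearMap R A)).comap ((b : R) • ψ) :=
    Submodule.span_le.mpr hb
  exact ⟨b, fun x => hspan (hT ▸ Submodule.mem_top)⟩

theorem exists_linearMap_comp_eq_smul (hS : S ≤ R⁰) (ψ : M →ₗ[R] A) :
    ∃ (b : S) (φ : M →ₗ[R] R), Algebra.linearMap R A ∘ₗ φ = (b : R) • ψ := by
  obtain ⟨b, hb⟩ := exists_smul_mem_range_linearMap S ψ
  have hinj : Function.Injective (Algebra.linearMap R A) := IsLocalization.injective A hS
  refine ⟨b, (LinearEquiv.ofInjective _ hinj).symm.toLinearMap ∘ₗ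
    ((b : R) • ψ).codRestrict _ hb, ?_⟩
  ext x
  exact LinearEquiv.ofInjective_symm_apply (h := hinj) (f := Algebra.linearMap R A) _

end IsLocalization

theorem Module.exists_dual_apply_ne_zero_of_isTorsionFree {R M : Type*} [CommRing R]
    [IsDomain R] [AddCommGroup M] [Module R M] [Module.Finite R M] [Module.IsTorsionFree R M]
    {m : M} (hm : m ≠ 0) : ∃ φ : Module.Dual R M, φ m ≠ 0 := by
  let K := FractionRing R
  let f := LocalizedModule.mkLinearMap R⁰ M
  have hfm : f m ≠ 0 := by
    rw [Ne, IsLocalizedModule.eq_zero_iff R⁰ f]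
    rintro ⟨s, hs⟩
    exact hm ((IsRegular.of_ne_zero (nonZeroDivisors.coe_ne_zero s)).smul_eq_zero_iff_right.mp hs)
  have : Module.Finite K (LocalizedModule R⁰ M) := Module.Finite.of_isLocalizedModule R⁰ f
  obtain ⟨g, hg⟩ := Module.Projective.exists_dual_ne_zero K hfm
  obtain ⟨b, φ, hφ⟩ :=
    IsLocalization.exists_linearMap_comp_eq_smul R⁰ le_rfl ((g.restrictScalars R).comp f)
  have hφm : algebraMap R K (φ m) = (b : R) • g (f m) := congr($hφ m)
  refine ⟨φ, fun h => smul_ne_zero (nonZeroDivisors.coe_ne_zero b) hg ?_⟩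
  rw [← hφm, h, map_zero]

/-- For a module-finite extension of domains `R ⊆ S` and a nonzero `c ∈ S`, there is
an `R`-linear map `φ : S → R` with `φ(c) ≠ 0`. -/
theorem exists_linearMap_ne_zero_of_module_finite
    (R : Type) [CommRing R] [IsDomain R] (S : Type) [CommRing S] [IsDomain S]
    [Algebra R S] (hinj : Function.Injective (algebraMap R S)) [Module.Finite R S]
    (c : S) (hc : c ≠ 0) :
    ∃ φ : S →ₗ[R] R, φ c ≠ 0 := by
  have : Module.IsTorsionFree R S := Module.isTorsionFree_iff_algebraMap_injective.mpr hinj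
  exact Module.exists_dual_apply_ne_zero_of_isTorsionFree hc
end
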